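/- Let q ≥ 2 be an integer and let α be a nonzero non-unit of Z_q of additive order d. Then for every c ∈ S_2(q), the codeword (c, α, c + α·𝟏, c + 2α·𝟏, …, c + (q−1)α·𝟏) of the Z_q-Simplex code S_3(q) has Hamming weight 1 + q(q + 1) − (q/d)·Σ_{i=0}^{d−1} n(iα), where n(x) denotes the number of coordinates of c equal to x. -/

import Mathlib

/-! The block `c + iα·𝟏` vanishes exactly where `c` equals `-iα`, so the weight is
`1 + q·|c| - Σ_{x ∈ ℤ_q} n(-xα)`. Negation reindexes away the sign, and `x ↦ xα` covers each
multiple `iα`, `i < d`, exactly `q/d` times. -/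

/-- Hamming weight of a word over `ZMod q`: the number of nonzero coordinates. -/
def wt {q : ℕ} (l : List (ZMod q)) : ℕ := l.countP (fun x => decide (x ≠ 0))

/-- The word `(c, α, c + α·𝟏, c + 2α·𝟏, …, c + (q−1)α·𝟏)`, where `𝟏` is the
all-ones vector of the same length as `c`. -/
def simplexWord (q : ℕ) (α : ZMod q) (c : List (ZMod q)) : List (ZMod q) :=
  c ++ α :: (List.range (q - 1)).flatMap (fun i => c.map (fun x => x + ((i + 1 : ℕ) : ZMod q) * α))

/-- The `ZMod q`-Simplex code `S_k(q)` of dimension `k`, as a set of words (lists):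
`S_1(q) = ZMod q` (as length-1 words) and
`S_k(q) = {(c, α, c + α·𝟏, …, c + (q−1)α·𝟏) : c ∈ S_{k-1}(q), α ∈ ZMod q}`. -/
def simplex (q : ℕ) : ℕ → Set (List (ZMod q))
  | 0 => {[]}
  | k + 1 => {w | ∃ c ∈ simplex q k, ∃ α : ZMod q, w = simplexWord q α c}

/-- The word `(α, c + α·𝟏, c + 2α·𝟏, …, c + (q−1)α·𝟏)`. -/
def macWord (q : ℕ) (α : ZMod q) (c : List (ZMod q)) : List (ZMod q) :=
  α :: (List.range (q - 1)).flatMap (fun i => c.map (fun x => x + ((i + 1 : ℕ) : ZMod q) * α))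

/-- The `ZMod q`-MacDonald code `M_{k,k-1}(q)`, as a set of words:
`M_{k,k-1}(q) = {(α, c + α·𝟏, …, c + (q−1)α·𝟏) : α ∈ ZMod q, c ∈ S_{k-1}(q)}`. -/
def macdonald (q k : ℕ) : Set (List (ZMod q)) :=
  {w | ∃ α : ZMod q, ∃ c ∈ simplex q (k - 1), w = macWord q α c}

open Finset

section Sums

variable {M : Type*} [AddCommMonoid M]

theorem Function.Periodic.sum_range_mul {g : ℕ → M} {d : ℕ} (hg : Function.Periodic g d)
    (k : ℕ) : ∑ m ∈ range (k * d), g m = k • ∑ m ∈ range d, g m := by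
  induction k with
  | zero => simp
  | succ k ih =>
    rw [Nat.succ_mul, sum_range_add, ih, succ_nsmul]
    congr 1
    refine sum_congr rfl fun j _ => ?_
    simpa [add_comm] using (hg.nat_mul k) j

theorem ZMod.sum_univ_eq_sum_range {q : ℕ} [NeZero q] (f : ZMod q → M) :
    ∑ x : ZMod q, f x = ∑ i ∈ range q, f i := by
  refine sum_nbij' ZMod.val Nat.cast (fun x _ => mem_range.2 (ZMod.val_lt x))
    (fun _ _ => mem_univ _) (fun x _ => ZMod.natCast_zmod_val x)
    (fun i hi => ZMod.val_cast_of_lt (mem_range.1 hi)) (fun x _ => by rw [ZMod.natCast_zmod_val])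

theorem ZMod.sum_univ_comp_mul {q : ℕ} [NeZero q] (α : ZMod q) (f : ZMod q → M) :
    ∑ x : ZMod q, f (x * α) = (q / addOrderOf α) • ∑ i ∈ range (addOrderOf α), f (i * α) := by
  have hperiodic : Function.Periodic (fun i : ℕ => f (i * α)) (addOrderOf α) := fun i => by
    simp only [Nat.cast_add, add_mul, ← nsmul_eq_mul, addOrderOf_nsmul_eq_zero, add_zero]
  have hdvd : addOrderOf α ∣ q := by
    simpa only [ZMod.card] using addOrderOf_dvd_card (x := α)
  rw [ZMod.sum_univ_eq_sum_range (fun x => f (x * α)), ← hperiodic.sum_range_mul,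
    Nat.div_mul_cancel hdvd]

end Sums

section Words

variable {q : ℕ}

theorem wt_map_add (β : ZMod q) (c : List (ZMod q)) :
    wt (c.map (· + β)) = c.length - c.count (-β) := by
  have hsplit := c.length_eq_countP_add_countP (· == -β)
  have hnonzero : wt (c.map (· + β)) = c.countP (fun x => ¬(x == -β)) := by
    rw [wt, List.countP_map]
    refine List.countP_congr fun x _ => ?_
    simp [eq_neg_iff_add_eq_zero]
  rw [List.count_eq_countP]
  omega

theorem length_simplexWord (hq : 1 ≤ q) (α : ZMod q) (c : List (ZMod q)) :
    (simplexWord q α c).length = q * c.length + 1 := by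
  obtain ⟨n, rfl⟩ := Nat.exists_eq_add_of_le' hq
  simp [simplexWord, List.length_flatMap]
  ring

theorem length_of_mem_simplex (hq : 1 ≤ q) {k : ℕ} {c : List (ZMod q)} (hc : c ∈ simplex q k) :
    c.length = ∑ i ∈ range k, q ^ i := by
  induction k generalizing c with
  | zero => simp_all [simplex]
  | succ k ih =>
    obtain ⟨c', hc', α, rfl⟩ := hc
    rw [length_simplexWord hq, ih hc', sum_range_succ', mul_sum]
    simp [pow_succ, mul_comm]

theorem wt_simplexWord_eq_one_add_sum [NeZero q] {α : ZMod q} (hα : α ≠ 0)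
    (c : List (ZMod q)) : wt (simplexWord q α c) = 1 + ∑ x : ZMod q, wt (c.map (· + x * α)) := by
  obtain ⟨n, rfl⟩ : ∃ n, q = n + 1 := Nat.exists_eq_succ_of_ne_zero (NeZero.ne q)
  have hsum (f : ℕ → ℕ) : ((List.range n).map f).sum = ∑ i ∈ range n, f i := rfl
  rw [ZMod.sum_univ_eq_sum_range, sum_range_succ']
  simp only [simplexWord, wt, List.countP_append, List.countP_cons, List.countP_flatMap,
    Nat.add_sub_cancel, Function.comp_def, hsum, Nat.cast_zero, zero_mul, add_zero, List.map_id',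
    ne_eq, hα, not_false_eq_true, decide_true, if_true]
  omega

theorem wt_simplexWord [NeZero q] {α : ZMod q} (hα : α ≠ 0) (c : List (ZMod q)) :
    wt (simplexWord q α c) = 1 + q * c.length - ∑ x : ZMod q, c.count (x * α) := by
  have hneg : ∑ x : ZMod q, c.count (-(x * α)) = ∑ x : ZMod q, c.count (x * α) :=
    Fintype.sum_equiv (Equiv.neg _) _ _ fun x => by simp [neg_mul]
  have hbound : ∑ x : ZMod q, c.count (x * α) ≤ q * c.length := by
    simpa using
      sum_le_card_nsmul (univ : Finset (ZMod q)) _ c.length fun _ _ => List.count_le_length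
  simp_rw [wt_simplexWord_eq_one_add_sum hα, wt_map_add]
  rw [sum_tsub_distrib _ fun _ _ => List.count_le_length, sum_const, card_univ, ZMod.card,
    smul_eq_mul, hneg, Nat.add_sub_assoc hbound]

end Words

theorem simplex_three_nonunit_weight_general (q : ℕ) (hq : 2 ≤ q)
    (α : ZMod q) (hα : α ≠ 0) (d : ℕ) (hd : addOrderOf α = d)
    (c : List (ZMod q)) (hc : c ∈ simplex q 2) :
    wt (simplexWord q α c) =
      1 + q * (q + 1) - (q / d) * ∑ i ∈ Finset.range d, c.count ((i : ZMod q) * α) := by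
  have : NeZero q := ⟨by omega⟩
  have hlen : c.length = q + 1 := by
    simpa [add_comm] using length_of_mem_simplex (by omega) hc
  rw [wt_simplexWord hα, ZMod.sum_univ_comp_mul α (c.count ·), hd, hlen, smul_eq_mul]

/-- For a nonzero non-unit `α` of `ZMod q` of additive order `d` and every
`c ∈ S_2(q)`, the codeword `(c, α, c + α·𝟏, …, c + (q−1)α·𝟏)` of `S_3(q)` has
Hamming weight `1 + q(q + 1) − (q/d)·Σ_{i=0}^{d−1} n(iα)`, where `n(x)` is the
number of coordinates of `c` equal to `x`. -/
theorem simplex_three_nonunit_weight (q : ℕ) (hq : 2 ≤ q)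
    (α : ZMod q) (hα : α ≠ 0) (hnu : ¬IsUnit α) (d : ℕ) (hd : addOrderOf α = d)
    (c : List (ZMod q)) (hc : c ∈ simplex q 2) :
    wt (simplexWord q α c) =
      1 + q * (q + 1) - (q / d) * ∑ i ∈ Finset.range d, c.count ((i : ZMod q) * α) :=
  simplex_three_nonunit_weight_general q hq α hα d hd c hc
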